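/- Let Q(x) = ∫_x^∞ (2π)^{−1/2} e^{−u²/2} du and Q^{−1} its inverse on (0,1). Fix k ≥ 1, priors P_0, P_1 ≥ 0 with P_0 + P_1 = 1, constants δ_1,…,δ_k ∈ (0,1), and for each level m ∈ {1,…,k+1} and hypothesis l ∈ {0,1} probabilities p_H(m,l) ∈ (0,1); for level k+1 let p_B(l) ∈ (0,1) with q_{k+1} < p_B(l) for l ∈ {0,1}, where q_m = max{p_H(m,0), p_H(m,1)}. For T > 0 define thresholds η_m(T) = T·q_m + Q^{−1}(δ_m)·√(T·q_m(1−q_m)) for m ≤ k and η_{k+1}(T) = T·q_{k+1} + Q^{−1}(δ')·√(T·q_{k+1}(1−q_{k+1})) for any fixed δ' ∈ (0,1), and set b(m,l,T) = Q( (η_m(T) − T·p_H(m,l)) / √(T·p_H(m,l)(1−p_H(m,l))) ), a(l,T) = Q( (η_{k+1}(T) − T·p_B(l)) / √(T·p_B(l)(1−p_B(l))) ), and P^iso(T) = Σ_{l∈{0,1}} P_l · a(l,T) · ∏_{m=1}^k (1 − b(m,l,T)). Then liminf_{T→∞} P^iso(T) ≥ ∏_{m=1}^k (1 − δ_m). 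-/

import Mathlib

open Filter Finset

/-- The standard Gaussian tail function `Q(x) = ∫ₓ^∞ (2π)^{-1/2} e^{-u²/2} du`. -/
noncomputable def gaussQ (x : ℝ) : ℝ :=
  ∫ u in Set.Ioi x, (Real.sqrt (2 * Real.pi))⁻¹ * Real.exp (-(u ^ 2) / 2)

/-!
Under each hypothesis the argument of `Q` in `a(l,T)` is `√T (q_{k+1} − p_B(l))/σ + O(1)`
with `q_{k+1} < p_B(l)`, so it tends to `−∞` and `a(l,T) → 1`. For an honest level the argument is
`√T (q_m − p_H(m,l))/σ + Q⁻¹(δ_m)·σ'/σ` with `p_H(m,l) ≤ q_m`: if the inequality is strict it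
tends to `+∞` and `b(m,l,T) → 0`, and if it is an equality it is constantly `Q⁻¹(δ_m)`, so
`b(m,l,T) → δ_m`. Hence `P^iso(T)` converges to a convex combination of products each at least
`∏ (1 − δ_m)`.
-/

open MeasureTheory ProbabilityTheory Topology

lemma gaussQ_eq_one_sub_cdf (x : ℝ) : gaussQ x = 1 - cdf (gaussianReal 0 1) x := by
  have hQ : gaussQ x = (gaussianReal 0 1).real (Set.Ioi x) := by
    rw [measureReal_def, gaussianReal_apply_eq_integral _ one_ne_zero, ENNReal.toReal_ofReal
      (setIntegral_nonneg measurableSet_Ioi fun u _ => gaussianPDFReal_nonneg _ _ u)]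
    simp [gaussQ, gaussianPDFReal]
  rw [hQ, cdf_eq_real, ← Set.compl_Iic, probReal_compl_eq_one_sub measurableSet_Iic]

lemma tendsto_gaussQ_atBot : Tendsto gaussQ atBot (𝓝 1) := by
  simpa [funext gaussQ_eq_one_sub_cdf] using (tendsto_cdf_atBot (gaussianReal 0 1)).const_sub 1

lemma tendsto_gaussQ_atTop : Tendsto gaussQ atTop (𝓝 0) := by
  simpa [funext gaussQ_eq_one_sub_cdf] using (tendsto_cdf_atTop (gaussianReal 0 1)).const_sub 1

/-- The standardized distance of a threshold `η` from the mean `T p` of a binomial count with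
`T` trials and success probability `p`. -/
noncomputable def zScore (η T p : ℝ) : ℝ := (η - T * p) / Real.sqrt (T * p * (1 - p))

section zScore

variable {p q C T : ℝ}

lemma zScore_threshold_eq (hT : 0 < T) (hp : p ∈ Set.Ioo (0 : ℝ) 1) :
    zScore (T * q + C * Real.sqrt (T * q * (1 - q))) T p =
      Real.sqrt T * ((q - p) / Real.sqrt (p * (1 - p)))
        + C * (Real.sqrt (q * (1 - q)) / Real.sqrt (p * (1 - p))) := by
  have hσ : Real.sqrt (p * (1 - p)) ≠ 0 := (Real.sqrt_pos.2 (by nlinarith [hp.1, hp.2])).ne'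
  obtain ⟨r, hr, rfl⟩ : ∃ r, 0 < r ∧ T = r ^ 2 :=
    ⟨Real.sqrt T, Real.sqrt_pos.2 hT, (Real.sq_sqrt hT.le).symm⟩
  rw [zScore, mul_assoc _ q, Real.sqrt_mul hT.le, mul_assoc _ p, Real.sqrt_mul hT.le,
    Real.sqrt_sq hr.le]
  field_simp
  ring

lemma tendsto_sqrt_mul_add_const {c d : ℝ} (hc : 0 < c) :
    Tendsto (fun T => Real.sqrt T * c + d) atTop atTop :=
  tendsto_atTop_add_const_right _ d (Real.tendsto_sqrt_atTop.atTop_mul_const hc)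

lemma tendsto_gaussQ_zScore_threshold_of_lt (hp : p ∈ Set.Ioo (0 : ℝ) 1) (hqp : q < p) :
    Tendsto (fun T => gaussQ (zScore (T * q + C * Real.sqrt (T * q * (1 - q))) T p))
      atTop (𝓝 1) := by
  have hσ : 0 < Real.sqrt (p * (1 - p)) := Real.sqrt_pos.2 (by nlinarith [hp.1, hp.2])
  have harg := tendsto_neg_atTop_atBot.comp <| tendsto_sqrt_mul_add_const
    (d := -(C * (Real.sqrt (q * (1 - q)) / Real.sqrt (p * (1 - p))))) (div_pos (sub_pos.2 hqp) hσ)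
  refine (tendsto_gaussQ_atBot.comp harg).congr' ?_
  filter_upwards [eventually_gt_atTop 0] with T hT
  rw [Function.comp_apply, Function.comp_apply, zScore_threshold_eq hT hp]
  congr 1
  ring

lemma tendsto_gaussQ_zScore_threshold_of_gt (hp : p ∈ Set.Ioo (0 : ℝ) 1) (hpq : p < q) :
    Tendsto (fun T => gaussQ (zScore (T * q + C * Real.sqrt (T * q * (1 - q))) T p))
      atTop (𝓝 0) := by
  have hσ : 0 < Real.sqrt (p * (1 - p)) := Real.sqrt_pos.2 (by nlinarith [hp.1, hp.2])
  have harg := tendsto_sqrt_mul_add_const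
    (d := C * (Real.sqrt (q * (1 - q)) / Real.sqrt (p * (1 - p)))) (div_pos (sub_pos.2 hpq) hσ)
  refine (tendsto_gaussQ_atTop.comp harg).congr' ?_
  filter_upwards [eventually_gt_atTop 0] with T hT
  rw [Function.comp_apply, zScore_threshold_eq hT hp]

lemma gaussQ_zScore_threshold_self (hT : 0 < T) (hp : p ∈ Set.Ioo (0 : ℝ) 1) :
    gaussQ (zScore (T * p + C * Real.sqrt (T * p * (1 - p))) T p) = gaussQ C := by
  have hσ : Real.sqrt (p * (1 - p)) ≠ 0 := (Real.sqrt_pos.2 (by nlinarith [hp.1, hp.2])).ne'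
  rw [zScore_threshold_eq hT hp, sub_self, zero_div, mul_zero, zero_add, div_self hσ, mul_one]

lemma exists_tendsto_gaussQ_zScore_threshold_le {δ : ℝ} (hp : p ∈ Set.Ioo (0 : ℝ) 1)
    (hpq : p ≤ q) (hδ : 0 ≤ δ) (hC : gaussQ C = δ) :
    ∃ c ≤ δ, Tendsto
      (fun T => gaussQ (zScore (T * q + C * Real.sqrt (T * q * (1 - q))) T p)) atTop (𝓝 c) := by
  rcases hpq.eq_or_lt with rfl | hpq
  · refine ⟨δ, le_rfl, tendsto_const_nhds.congr' ?_⟩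
    filter_upwards [eventually_gt_atTop 0] with T hT
    rw [gaussQ_zScore_threshold_self hT hp, hC]
  · exact ⟨0, hδ, tendsto_gaussQ_zScore_threshold_of_gt hp hpq⟩

end zScore

lemma exists_tendsto_prod_one_sub_ge {ι α : Type*} {l : Filter α} (s : Finset ι)
    {f : ι → α → ℝ} {δ : ι → ℝ} (hδ : ∀ i ∈ s, δ i ≤ 1)
    (hf : ∀ i ∈ s, ∃ c ≤ δ i, Tendsto (f i) l (𝓝 c)) :
    ∃ L, Tendsto (fun x => ∏ i ∈ s, (1 - f i x)) l (𝓝 L) ∧ ∏ i ∈ s, (1 - δ i) ≤ L := by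
  choose! c hcδ hc using hf
  exact ⟨∏ i ∈ s, (1 - c i), tendsto_finsetProd _ fun i hi => (hc i hi).const_sub 1,
    prod_le_prod (fun i hi => sub_nonneg.2 (hδ i hi)) fun i hi => sub_le_sub_left (hcδ i hi) 1⟩

/-- Honest levels are indexed `0,…,k-1` and the Byzantine level is indexed `k`. -/
theorem stmt_18_general
    (Qinv : ℝ → ℝ) (hQinv : ∀ y ∈ Set.Ioo (0 : ℝ) 1, gaussQ (Qinv y) = y)
    (k : ℕ)
    (P0 P1 : ℝ) (hP0 : 0 ≤ P0) (hP1 : 0 ≤ P1) (hP : P0 + P1 = 1)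
    (δ : ℕ → ℝ) (hδ : ∀ m < k, δ m ∈ Set.Ioo (0 : ℝ) 1)
    (δ' : ℝ)
    (pH : ℕ → ℕ → ℝ) (hpH : ∀ m ≤ k, ∀ l < 2, pH m l ∈ Set.Ioo (0 : ℝ) 1)
    (pB : ℕ → ℝ) (hpB : ∀ l < 2, pB l ∈ Set.Ioo (0 : ℝ) 1)
    (q : ℕ → ℝ) (hq : ∀ m ≤ k, q m = max (pH m 0) (pH m 1))
    (hqB : ∀ l < 2, q k < pB l)
    (η : ℕ → ℝ → ℝ)
    (hη : ∀ m < k, ∀ T : ℝ,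
      η m T = T * q m + Qinv (δ m) * Real.sqrt (T * q m * (1 - q m)))
    (ηB : ℝ → ℝ)
    (hηB : ∀ T : ℝ, ηB T = T * q k + Qinv δ' * Real.sqrt (T * q k * (1 - q k)))
    (b : ℕ → ℕ → ℝ → ℝ)
    (hb : ∀ m < k, ∀ l < 2, ∀ T : ℝ,
      b m l T = gaussQ ((η m T - T * pH m l) / Real.sqrt (T * pH m l * (1 - pH m l))))
    (a : ℕ → ℝ → ℝ)
    (ha : ∀ l < 2, ∀ T : ℝ,
      a l T = gaussQ ((ηB T - T * pB l) / Real.sqrt (T * pB l * (1 - pB l))))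
    (Piso : ℝ → ℝ)
    (hPiso : ∀ T : ℝ, Piso T =
      P0 * (a 0 T * ∏ m ∈ range k, (1 - b m 0 T)) +
      P1 * (a 1 T * ∏ m ∈ range k, (1 - b m 1 T))) :
    ∏ m ∈ range k, (1 - δ m) ≤ liminf Piso atTop := by
  have hpH_le : ∀ m < k, ∀ l < 2, pH m l ≤ q m := by
    intro m hm l hl
    interval_cases l <;> simp [hq m hm.le]
  have byzantine : ∀ l < 2, Tendsto (a l) atTop (𝓝 1) := fun l hl =>
    (tendsto_gaussQ_zScore_threshold_of_lt (hpB l hl) (hqB l hl)).congr fun T => by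
      rw [ha l hl T, hηB T, zScore]
  have honest : ∀ l < 2, ∃ L, Tendsto (fun T => ∏ m ∈ range k, (1 - b m l T)) atTop (𝓝 L) ∧
      ∏ m ∈ range k, (1 - δ m) ≤ L := fun l hl =>
    exists_tendsto_prod_one_sub_ge _ (fun m hm => (hδ m (mem_range.1 hm)).2.le) fun m hm => by
      have hm := mem_range.1 hm
      obtain ⟨c, hc, hlim⟩ := exists_tendsto_gaussQ_zScore_threshold_le (hpH m hm.le l hl)
        (hpH_le m hm l hl) (hδ m hm).1.le (hQinv _ (hδ m hm))
      exact ⟨c, hc, hlim.congr fun T => by rw [hb m hm l hl T, hη m hm T, zScore]⟩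
  obtain ⟨L0, hL0, hδL0⟩ := honest 0 (by norm_num)
  obtain ⟨L1, hL1, hδL1⟩ := honest 1 (by norm_num)
  have hPiso_lim : Tendsto Piso atTop (𝓝 (P0 * (1 * L0) + P1 * (1 * L1))) :=
    ((((byzantine 0 (by norm_num)).mul hL0).const_mul P0).add
      (((byzantine 1 (by norm_num)).mul hL1).const_mul P1)).congr fun T => (hPiso T).symm
  rw [hPiso_lim.liminf_eq]
  calc ∏ m ∈ range k, (1 - δ m)
        = P0 * ∏ m ∈ range k, (1 - δ m) + P1 * ∏ m ∈ range k, (1 - δ m) := by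
          rw [← add_mul, hP, one_mul]
    _ ≤ P0 * (1 * L0) + P1 * (1 * L1) := by
        rw [one_mul, one_mul]
        gcongr

/-- Asymptotic lower bound on the isolation probability of a Byzantine node at level
`k+1`:  `liminf_{T→∞} P^iso(T) ≥ ∏_{m=1}^k (1 − δ_m)`.  Honest levels are indexed
`0,…,k-1` and the Byzantine level is indexed `k`. -/
theorem stmt_18
    (Qinv : ℝ → ℝ) (hQinv : ∀ y ∈ Set.Ioo (0 : ℝ) 1, gaussQ (Qinv y) = y)
    (k : ℕ) (hk : 1 ≤ k)
    (P0 P1 : ℝ) (hP0 : 0 ≤ P0) (hP1 : 0 ≤ P1) (hP : P0 + P1 = 1)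
    (δ : ℕ → ℝ) (hδ : ∀ m < k, δ m ∈ Set.Ioo (0 : ℝ) 1)
    (δ' : ℝ) (hδ' : δ' ∈ Set.Ioo (0 : ℝ) 1)
    (pH : ℕ → ℕ → ℝ) (hpH : ∀ m ≤ k, ∀ l < 2, pH m l ∈ Set.Ioo (0 : ℝ) 1)
    (pB : ℕ → ℝ) (hpB : ∀ l < 2, pB l ∈ Set.Ioo (0 : ℝ) 1)
    (q : ℕ → ℝ) (hq : ∀ m ≤ k, q m = max (pH m 0) (pH m 1))
    (hqB : ∀ l < 2, q k < pB l)
    (η : ℕ → ℝ → ℝ)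
    (hη : ∀ m < k, ∀ T : ℝ,
      η m T = T * q m + Qinv (δ m) * Real.sqrt (T * q m * (1 - q m)))
    (ηB : ℝ → ℝ)
    (hηB : ∀ T : ℝ, ηB T = T * q k + Qinv δ' * Real.sqrt (T * q k * (1 - q k)))
    (b : ℕ → ℕ → ℝ → ℝ)
    (hb : ∀ m < k, ∀ l < 2, ∀ T : ℝ,
      b m l T = gaussQ ((η m T - T * pH m l) / Real.sqrt (T * pH m l * (1 - pH m l))))
    (a : ℕ → ℝ → ℝ)
    (ha : ∀ l < 2, ∀ T : ℝ,
      a l T = gaussQ ((ηB T - T * pB l) / Real.sqrt (T * pB l * (1 - pB l))))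
    (Piso : ℝ → ℝ)
    (hPiso : ∀ T : ℝ, Piso T =
      P0 * (a 0 T * ∏ m ∈ range k, (1 - b m 0 T)) +
      P1 * (a 1 T * ∏ m ∈ range k, (1 - b m 1 T))) :
    ∏ m ∈ range k, (1 - δ m) ≤ liminf Piso atTop :=
  stmt_18_general Qinv hQinv k P0 P1 hP0 hP1 hP δ hδ δ' pH hpH pB hpB q hq hqB η hη ηB hηB b hb a ha
    Piso hPiso
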